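/- Proposition (unstable cells of W_k). For each j ∈ {0,…,k}, the unstable cell of W_k at the vertex e_j, namely the set {x ∈ Δ_k : there exists a trajectory γ of W_k with γ(t) ∈ Δ_k for all t, γ(0) = x, and γ(t) → e_j as t → −∞}, is equal to the set {x ∈ Δ_k : x_i = 0 for every i < j, and x_j > 0} (the face of Δ_k spanned by the vertices e_j, …, e_k minus its sub-face spanned by e_{j+1}, …, e_k). -/

import Mathlib

/-!
The cumulative sums `S_m(x) = x_0 + ⋯ + x_{m-1}` linearise the dynamics: `W_k` telescopes in
them, so along a trajectory of `W_k` in `Δ_k` each `S_m` solves the logistic equation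
`S' = S (S - 1)`. A solution with values in `[0, 1]` is nonincreasing, and `S eᵗ` is
nondecreasing. Hence if `γ(t) → e_j` as `t → -∞`, then `S_j(γ) → 0` forces `S_j ≡ 0`, while
`S_{j+1}(γ) → 1` forces `x_j = S_{j+1}(γ(0)) > 0`. Conversely, running the explicit logistic
flow `c / (c + (1 - c) eᵗ)` from each `c = S_m(x)` gives the cumulative sums of a trajectory
through `x`; it tends to `e_j` because `S_m(x)` vanishes exactly for `m ≤ j`.
-/

open Finset Filter

/-- The simplicial vector field `W_k` on `ℝ^{k+1}`, given componentwise by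
`(W_k x)_m = x_m * (∑_{i<m} x_i − ∑_{i>m} x_i)`. -/
noncomputable def Wfield (k : ℕ) (x : Fin (k + 1) → ℝ) : Fin (k + 1) → ℝ :=
  fun m => x m * ((∑ i ∈ univ.filter (fun i => i < m), x i)
                - (∑ i ∈ univ.filter (fun i => m < i), x i))

section CumSum

variable {M : Type*} [AddCommMonoid M] {n : ℕ}

-- Indexed by `ℕ`, so that `cumSum x (i + 1)` needs no casts for the last `i : Fin n`.
def cumSum (x : Fin n → M) (m : ℕ) : M :=
  ∑ i ∈ univ.filter (fun i : Fin n => (i : ℕ) < m), x i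

@[simp]
lemma cumSum_zero (x : Fin n → M) : cumSum x 0 = 0 := by
  simp [cumSum]

lemma cumSum_succ (x : Fin n → M) (i : Fin n) : cumSum x (i + 1) = cumSum x i + x i := by
  have : univ.filter (fun l : Fin n => (l : ℕ) < i + 1)
      = insert i (univ.filter (fun l : Fin n => (l : ℕ) < i)) := by
    ext l
    simp only [mem_filter, mem_univ, true_and, mem_insert, Fin.ext_iff]
    omega
  rw [cumSum, this, sum_insert (by simp), add_comm]
  rfl

lemma cumSum_succ_of_lt (x : Fin n → M) {m : ℕ} (hm : m < n) :
    cumSum x (m + 1) = cumSum x m + x ⟨m, hm⟩ :=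
  cumSum_succ x ⟨m, hm⟩

lemma cumSum_of_le (x : Fin n → M) {m : ℕ} (hm : n ≤ m) : cumSum x m = ∑ i, x i := by
  rw [cumSum, filter_true_of_mem fun i _ => i.isLt.trans_le hm]

lemma sum_filter_lt_eq_cumSum (x : Fin n → M) (i : Fin n) :
    ∑ l ∈ univ.filter (fun l => l < i), x l = cumSum x i :=
  rfl

lemma sum_filter_gt_eq_sub_cumSum {G : Type*} [AddCommGroup G] (x : Fin n → G) (i : Fin n) :
    ∑ l ∈ univ.filter (fun l => i < l), x l = ∑ l, x l - cumSum x (i + 1) := by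
  rw [eq_sub_iff_add_eq, ← sum_filter_add_sum_filter_not univ (fun l => i < l), cumSum]
  congr 1
  refine sum_congr ?_ fun _ _ => rfl
  ext l
  simp only [mem_filter, mem_univ, true_and, not_lt, Fin.le_def]
  omega

lemma cumSum_hasDerivAt {γ : ℝ → Fin n → ℝ} {γ' : Fin n → ℝ} {t : ℝ} (hγ : HasDerivAt γ γ' t)
    (m : ℕ) : HasDerivAt (fun s => cumSum (γ s) m) (cumSum γ' m) t :=
  HasDerivAt.fun_sum fun i _ => hasDerivAt_pi.1 hγ i

lemma continuous_cumSum (m : ℕ) : Continuous fun x : Fin n → ℝ => cumSum x m := by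
  unfold cumSum
  fun_prop

lemma cumSum_single (j : Fin n) (m : ℕ) :
    cumSum (Pi.single j (1 : ℝ)) m = if (j : ℕ) < m then 1 else 0 := by
  simp [cumSum, Pi.single_apply]

lemma cumSum_nonneg {x : Fin n → ℝ} (hx : 0 ≤ x) (m : ℕ) : 0 ≤ cumSum x m :=
  sum_nonneg fun i _ => hx i

lemma cumSum_mono {x : Fin n → ℝ} (hx : 0 ≤ x) : Monotone (cumSum x) := fun _ _ hab =>
  sum_le_sum_of_subset_of_nonneg
    (fun _ hi => mem_filter.2 ⟨mem_univ _, (mem_filter.1 hi).2.trans_le hab⟩) fun i _ _ => hx i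

lemma cumSum_le_sum {x : Fin n → ℝ} (hx : 0 ≤ x) (m : ℕ) : cumSum x m ≤ ∑ i, x i :=
  sum_le_sum_of_subset_of_nonneg (filter_subset _ _) fun i _ _ => hx i

lemma cumSum_eq_zero_iff {x : Fin n → ℝ} (hx : 0 ≤ x) (m : ℕ) :
    cumSum x m = 0 ↔ ∀ i : Fin n, (i : ℕ) < m → x i = 0 := by
  simp [cumSum, sum_eq_zero_iff_of_nonneg fun i _ => hx i]

end CumSum

lemma Wfield_apply_eq_sub (k : ℕ) (x : Fin (k + 1) → ℝ) (m : Fin (k + 1)) :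
    Wfield k x m = cumSum x (m + 1) * (cumSum x (m + 1) - ∑ i, x i)
      - cumSum x m * (cumSum x m - ∑ i, x i) := by
  rw [Wfield, sum_filter_lt_eq_cumSum, sum_filter_gt_eq_sub_cumSum, cumSum_succ]
  ring

lemma cumSum_Wfield (k : ℕ) (x : Fin (k + 1) → ℝ) {m : ℕ} (hm : m ≤ k + 1) :
    cumSum (Wfield k x) m = cumSum x m * (cumSum x m - ∑ i, x i) := by
  induction m with
  | zero => simp
  | succ m ih =>
    rw [cumSum_succ_of_lt _ hm, Wfield_apply_eq_sub, ih (Nat.le_of_succ_le hm)]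
    ring

-- The solution of `s' = s (s - 1)` with `s 0 = c`; it exists for all times iff `c ∈ [0, 1]`.
noncomputable def logisticFlow (c t : ℝ) : ℝ := c / (c + (1 - c) * Real.exp t)

section LogisticFlow

variable {c : ℝ}

lemma logisticFlow_denom_pos (hc0 : 0 ≤ c) (hc1 : c ≤ 1) (t : ℝ) :
    0 < c + (1 - c) * Real.exp t := by
  rcases hc0.eq_or_lt with rfl | hc
  · simpa using Real.exp_pos t
  · nlinarith [Real.exp_pos t]

@[simp]
lemma logisticFlow_zero_left (t : ℝ) : logisticFlow 0 t = 0 := by simp [logisticFlow]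

@[simp]
lemma logisticFlow_one_left (t : ℝ) : logisticFlow 1 t = 1 := by simp [logisticFlow]

@[simp]
lemma logisticFlow_zero_right (c : ℝ) : logisticFlow c 0 = c := by simp [logisticFlow]

lemma hasDerivAt_logisticFlow (hc0 : 0 ≤ c) (hc1 : c ≤ 1) (t : ℝ) :
    HasDerivAt (logisticFlow c) (logisticFlow c t * (logisticFlow c t - 1)) t := by
  have hD : HasDerivAt (fun t => c + (1 - c) * Real.exp t) ((1 - c) * Real.exp t) t := by
    simpa using ((Real.hasDerivAt_exp t).const_mul (1 - c)).const_add c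
  have hpos := logisticFlow_denom_pos hc0 hc1 t
  refine ((hasDerivAt_const t c).div hD hpos.ne').congr_deriv ?_
  simp only [logisticFlow]
  field_simp
  ring

lemma logisticFlow_le_logisticFlow {c' : ℝ} (hc0 : 0 ≤ c) (hcc' : c ≤ c') (hc'1 : c' ≤ 1)
    (t : ℝ) : logisticFlow c t ≤ logisticFlow c' t := by
  rw [logisticFlow, logisticFlow, div_le_div_iff₀ (logisticFlow_denom_pos hc0 (hcc'.trans hc'1) t)
    (logisticFlow_denom_pos (hc0.trans hcc') hc'1 t)]
  nlinarith [Real.exp_pos t]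

lemma tendsto_logisticFlow_atBot (hc : 0 < c) : Tendsto (logisticFlow c) atBot (nhds 1) := by
  have hD : Tendsto (fun t => c + (1 - c) * Real.exp t) atBot (nhds c) := by
    simpa using (Real.tendsto_exp_atBot.const_mul (1 - c)).const_add c
  have := (tendsto_const_nhds (x := c)).div hD hc.ne'
  rwa [div_self hc.ne'] at this

end LogisticFlow

section LogisticEquation

variable {G : ℝ → ℝ}

lemma antitone_of_hasDerivAt_logistic (hG : ∀ t, HasDerivAt G (G t * (G t - 1)) t)
    (h0 : ∀ t, 0 ≤ G t) (h1 : ∀ t, G t ≤ 1) : Antitone G :=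
  antitone_of_hasDerivAt_nonpos hG fun t =>
    mul_nonpos_of_nonneg_of_nonpos (h0 t) (sub_nonpos.2 (h1 t))

-- `(G eᵗ)' = G² eᵗ`
lemma monotone_mul_exp_of_hasDerivAt_logistic (hG : ∀ t, HasDerivAt G (G t * (G t - 1)) t) :
    Monotone fun t => G t * Real.exp t :=
  monotone_of_hasDerivAt_nonneg (fun t => (hG t).mul (Real.hasDerivAt_exp t)) fun t => by
    dsimp only [Pi.zero_apply]
    nlinarith [mul_nonneg (sq_nonneg (G t)) (Real.exp_pos t).le]

lemma pos_of_hasDerivAt_logistic (hG : ∀ t, HasDerivAt G (G t * (G t - 1)) t) {s t : ℝ}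
    (hst : s ≤ t) (hs : 0 < G s) : 0 < G t := by
  have := monotone_mul_exp_of_hasDerivAt_logistic hG hst
  have := mul_pos hs (Real.exp_pos s)
  exact pos_of_mul_pos_left (by linarith) (Real.exp_pos t).le

end LogisticEquation

section Trajectory

lemma tendsto_cumSum_of_tendsto_single {n : ℕ} {γ : ℝ → Fin n → ℝ} {j : Fin n}
    (hlim : Tendsto γ atBot (nhds (Pi.single j 1))) (m : ℕ) :
    Tendsto (fun t => cumSum (γ t) m) atBot (nhds (if (j : ℕ) < m then 1 else 0)) := by
  rw [← cumSum_single]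
  exact ((continuous_cumSum m).tendsto _).comp hlim

variable {k : ℕ} {γ : ℝ → Fin (k + 1) → ℝ} (hγ : ∀ t, HasDerivAt γ (Wfield k (γ t)) t)
  (hmem : ∀ t, γ t ∈ stdSimplex ℝ (Fin (k + 1)))
include hγ hmem

lemma hasDerivAt_cumSum_trajectory {m : ℕ} (hm : m ≤ k + 1) (t : ℝ) :
    HasDerivAt (fun s => cumSum (γ s) m) (cumSum (γ t) m * (cumSum (γ t) m - 1)) t := by
  simpa [cumSum_Wfield k _ hm, (hmem t).2] using cumSum_hasDerivAt (hγ t) m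

variable {j : Fin (k + 1)} (hlim : Tendsto γ atBot (nhds (Pi.single j 1)))
include hlim

lemma cumSum_trajectory_eq_zero (t : ℝ) : cumSum (γ t) j = 0 := by
  have hanti := antitone_of_hasDerivAt_logistic (hasDerivAt_cumSum_trajectory hγ hmem j.isLt.le)
    (fun s => cumSum_nonneg (hmem s).1 _)
    (fun s => (cumSum_le_sum (hmem s).1 _).trans_eq (hmem s).2)
  have hlim0 := tendsto_cumSum_of_tendsto_single hlim j
  rw [if_neg (lt_irrefl _)] at hlim0
  exact (hanti.ge_of_tendsto hlim0 t).antisymm (cumSum_nonneg (hmem t).1 _)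

lemma cumSum_succ_trajectory_pos (t : ℝ) : 0 < cumSum (γ t) (j + 1) := by
  have hlim1 := tendsto_cumSum_of_tendsto_single hlim (j + 1)
  rw [if_pos (Nat.lt_succ_self _)] at hlim1
  obtain ⟨a, ha⟩ := eventually_atBot.1 (hlim1.eventually (eventually_gt_nhds one_pos))
  exact pos_of_hasDerivAt_logistic (hasDerivAt_cumSum_trajectory hγ hmem j.isLt) (min_le_right a t)
    (ha _ (min_le_left a t))

end Trajectory

noncomputable def logisticCurve {n : ℕ} (x : Fin n → ℝ) (t : ℝ) : Fin n → ℝ :=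
  fun m => logisticFlow (cumSum x (m + 1)) t - logisticFlow (cumSum x m) t

section LogisticCurve

variable {n : ℕ} {x : Fin n → ℝ}

lemma cumSum_logisticCurve {m : ℕ} (hm : m ≤ n) (t : ℝ) :
    cumSum (logisticCurve x t) m = logisticFlow (cumSum x m) t := by
  induction m with
  | zero => simp
  | succ m ih =>
    rw [cumSum_succ_of_lt _ hm, ih (Nat.le_of_succ_le hm), logisticCurve]
    ring

@[simp]
lemma logisticCurve_zero_right (x : Fin n → ℝ) : logisticCurve x 0 = x := by
  ext m
  simp [logisticCurve, cumSum_succ]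

lemma logisticCurve_mem_stdSimplex (hx : x ∈ stdSimplex ℝ (Fin n)) (t : ℝ) :
    logisticCurve x t ∈ stdSimplex ℝ (Fin n) := by
  have hle : ∀ m, cumSum x m ≤ 1 := fun m => (cumSum_le_sum hx.1 m).trans_eq hx.2
  refine ⟨fun m => sub_nonneg.2 ?_, ?_⟩
  · exact logisticFlow_le_logisticFlow (cumSum_nonneg hx.1 _) (cumSum_mono hx.1 (Nat.le_succ _))
      (hle _) t
  · rw [← cumSum_of_le _ le_rfl, cumSum_logisticCurve le_rfl, cumSum_of_le _ le_rfl, hx.2,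
      logisticFlow_one_left]

lemma hasDerivAt_logisticCurve {k : ℕ} {x : Fin (k + 1) → ℝ} (hx : x ∈ stdSimplex ℝ (Fin (k + 1)))
    (t : ℝ) : HasDerivAt (logisticCurve x) (Wfield k (logisticCurve x t)) t := by
  have hle : ∀ m, cumSum x m ≤ 1 := fun m => (cumSum_le_sum hx.1 m).trans_eq hx.2
  refine hasDerivAt_pi.2 fun m => ?_
  refine ((hasDerivAt_logisticFlow (cumSum_nonneg hx.1 _) (hle _) t).sub
    (hasDerivAt_logisticFlow (cumSum_nonneg hx.1 _) (hle _) t)).congr_deriv ?_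
  rw [Wfield_apply_eq_sub, cumSum_logisticCurve m.isLt, cumSum_logisticCurve m.isLt.le,
    (logisticCurve_mem_stdSimplex hx t).2]

lemma tendsto_logisticCurve_atBot (hx : x ∈ stdSimplex ℝ (Fin n)) {j : Fin n}
    (hzero : ∀ i, i < j → x i = 0) (hpos : 0 < x j) :
    Tendsto (logisticCurve x) atBot (nhds (Pi.single j 1)) := by
  have hj : cumSum x j = 0 := (cumSum_eq_zero_iff hx.1 j).2 hzero
  have hflow : ∀ p, Tendsto (logisticFlow (cumSum x p)) atBot
      (nhds (cumSum (Pi.single j (1 : ℝ)) p)) := by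
    intro p
    rw [cumSum_single]
    split_ifs with hjp
    · refine tendsto_logisticFlow_atBot (hpos.trans_le ?_)
      calc x j = cumSum x (j + 1) := by rw [cumSum_succ, hj, zero_add]
        _ ≤ cumSum x p := cumSum_mono hx.1 hjp
    · have hp : cumSum x p = 0 :=
        (hj ▸ cumSum_mono hx.1 (not_lt.1 hjp)).antisymm (cumSum_nonneg hx.1 p)
      rw [hp, show logisticFlow 0 = fun _ => 0 from funext logisticFlow_zero_left]
      exact tendsto_const_nhds
  refine tendsto_pi_nhds.2 fun m => ?_
  have := (hflow (m + 1)).sub (hflow m)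
  rwa [cumSum_succ (Pi.single j 1), add_sub_cancel_left] at this

end LogisticCurve

/-- Unstable cells of `W_k`: the set of points of `Δ_k` lying on a trajectory
converging to the vertex `e_j` as `t → −∞` is exactly
`{x ∈ Δ_k : x_i = 0 for i < j, and x_j > 0}`. -/
theorem Wfield_unstable_cell (k : ℕ) (j : Fin (k + 1)) :
    {x : Fin (k + 1) → ℝ | x ∈ stdSimplex ℝ (Fin (k + 1)) ∧
      ∃ γ : ℝ → Fin (k + 1) → ℝ,
        (∀ t : ℝ, HasDerivAt γ (Wfield k (γ t)) t) ∧
        (∀ t : ℝ, γ t ∈ stdSimplex ℝ (Fin (k + 1))) ∧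
        γ 0 = x ∧
        Tendsto γ atBot (nhds (Pi.single j 1))}
    = {x : Fin (k + 1) → ℝ | x ∈ stdSimplex ℝ (Fin (k + 1)) ∧
        (∀ i : Fin (k + 1), i < j → x i = 0) ∧ 0 < x j} := by
  ext x
  constructor
  · rintro ⟨hx, γ, hγ, hmem, rfl, hlim⟩
    have hj := cumSum_trajectory_eq_zero hγ hmem hlim 0
    refine ⟨hx, (cumSum_eq_zero_iff hx.1 j).1 hj, ?_⟩
    simpa [cumSum_succ, hj] using cumSum_succ_trajectory_pos hγ hmem hlim 0
  · rintro ⟨hx, hzero, hpos⟩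
    exact ⟨hx, logisticCurve x, hasDerivAt_logisticCurve hx, logisticCurve_mem_stdSimplex hx,
      logisticCurve_zero_right x, tendsto_logisticCurve_atBot hx hzero hpos⟩
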